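/- Define u(x) = 1/h(x) − (1−x²)/2 + 1/(4m) for m ≥ 2, where h is as above. Then u satisfies the Riccati-type ODE x(1−x²)u'(x) − 4m u(x)² + (2(m+1)x² + 1 − 2m) u(x) − x²/(2m) = 0 on (0,1). -/

import Mathlib

/-- The coefficients `β_k = 2 (2m)(2m−2)⋯(2m−2k) / ((2m−1)(2m−3)⋯(2m−2k−1))`. -/
noncomputable def betaCoef (m k : ℕ) : ℝ :=
  2 * (∏ j ∈ Finset.range (k + 1), ((2 * m : ℝ) - 2 * j)) /
    (∏ j ∈ Finset.range (k + 1), ((2 * m : ℝ) - 2 * j - 1))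

/-- The polynomial `h(x) = ∑_{k=0}^{m−1} β_k x^{2k}`. -/
noncomputable def hFun (m : ℕ) (x : ℝ) : ℝ :=
  ∑ k ∈ Finset.range m, betaCoef m k * x ^ (2 * k)

/-- The function `u(x) = 1/h(x) − (1−x²)/2 + 1/(4m)`. -/
noncomputable def uFun (m : ℕ) (x : ℝ) : ℝ :=
  1 / hFun m x - (1 - x ^ 2) / 2 + 1 / (4 * m)

lemma odd_ne (m j : ℕ) : (2 * (m : ℝ) - 2 * j - 1) ≠ 0 := by
  intro h
  have : ((2 * (m : ℤ) - 2 * j - 1 : ℤ) : ℝ) = 0 := by push_cast; linarith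
  have h2 : (2 * (m : ℤ) - 2 * j - 1 : ℤ) = 0 := by exact_mod_cast this
  omega

lemma Qprod_ne (m k : ℕ) : (∏ j ∈ Finset.range (k + 1), ((2 * m : ℝ) - 2 * j - 1)) ≠ 0 :=
  Finset.prod_ne_zero_iff.2 fun j _ => odd_ne m j

lemma aux_div (P Q a b : ℝ) (hQ : Q ≠ 0) (hb : b ≠ 0) :
    2 * (P * a) / (Q * b) * b = 2 * P / Q * a := by field_simp

lemma beta_succ (m k : ℕ) :
    betaCoef m (k + 1) * (2 * (m : ℝ) - 2 * k - 3) = betaCoef m k * (2 * (m : ℝ) - 2 * k - 2) := by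
  unfold betaCoef
  rw [Finset.prod_range_succ, Finset.prod_range_succ (fun j => (2 * (m:ℝ)) - 2 * j - 1)]
  push_cast
  rw [show (2 * (m:ℝ) - 2 * ((k:ℝ) + 1)) = 2 * m - 2 * k - 2 from by ring,
    show (2 * (m:ℝ) - 2 * (k:ℝ) - 2 - 1) = 2 * m - 2 * k - 3 from by ring]
  exact aux_div _ _ _ _ (Qprod_ne m k)
    (fun h => odd_ne m (k + 1) (by push_cast; linarith))

lemma beta_m_zero (m : ℕ) : betaCoef m m = 0 := by
  unfold betaCoef
  rw [Finset.prod_eq_zero (Finset.self_mem_range_succ m) (by push_cast; ring)]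
  simp

lemma beta_zero (m : ℕ) : betaCoef m 0 = 2 * (2 * m) / (2 * m - 1) := by
  simp [betaCoef]

lemma beta_nonneg (m k : ℕ) (hk : k < m) : 0 ≤ betaCoef m k := by
  unfold betaCoef
  apply div_nonneg
  · have h : 0 ≤ ∏ j ∈ Finset.range (k + 1), ((2 * m : ℝ) - 2 * j) := by
      apply Finset.prod_nonneg
      intro j hj
      simp only [Finset.mem_range] at hj
      have hj' : j < m := by omega
      have : (j : ℝ) < m := by exact_mod_cast hj'
      linarith
    linarith
  · apply Finset.prod_nonneg
    intro j hj
    simp only [Finset.mem_range] at hj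
    have hj' : j < m := by omega
    have : (j : ℝ) + 1 ≤ m := by exact_mod_cast hj'
    linarith

lemma hFun_pos (m : ℕ) (hm : 2 ≤ m) (x : ℝ) (hx : 0 < x) : 0 < hFun m x := by
  unfold hFun
  apply Finset.sum_pos'
  · intro k hk
    simp only [Finset.mem_range] at hk
    exact mul_nonneg (beta_nonneg m k hk) (pow_nonneg hx.le _)
  · refine ⟨0, Finset.mem_range.2 (by omega), ?_⟩
    rw [beta_zero]
    have h1 : (0:ℝ) < 2 * (m:ℝ) - 1 := by
      have : (2:ℝ) ≤ m := by exact_mod_cast hm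
      linarith
    have h2 : (0:ℝ) < (m:ℝ) := by
      have : (2:ℝ) ≤ m := by exact_mod_cast hm
      linarith
    rw [show x ^ (2 * 0) = 1 from by norm_num, mul_one]
    positivity

lemma hasDerivAt_hFun (m : ℕ) (x : ℝ) :
    HasDerivAt (hFun m)
      (∑ k ∈ Finset.range m, betaCoef m k * ((2 * k) * x ^ (2 * k - 1))) x := by
  unfold hFun
  apply HasDerivAt.fun_sum
  intro k hk
  simpa using (hasDerivAt_pow (2 * k) x).const_mul (betaCoef m k)

lemma hODE (m : ℕ) (hm : 2 ≤ m) (x : ℝ) :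
    x * (x ^ 2 - 1) * (∑ k ∈ Finset.range m, betaCoef m k * ((2 * k) * x ^ (2 * k - 1)))
      + ((2 * m - 1) - 2 * ((m : ℝ) - 1) * x ^ 2) * hFun m x = 4 * m := by
  have key : ∀ k : ℕ,
      x * (x ^ 2 - 1) * (betaCoef m k * ((2 * k) * x ^ (2 * k - 1)))
        + ((2 * m - 1) - 2 * ((m : ℝ) - 1) * x ^ 2) * (betaCoef m k * x ^ (2 * k))
      = betaCoef m k * (2 * (m:ℝ) - 1 - 2 * k) * x ^ (2 * k)
        - betaCoef m (k+1) * (2 * (m:ℝ) - 1 - 2 * (k+1:ℕ)) * x ^ (2 * (k+1)) := by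
    intro k
    cases k with
    | zero =>
      have hb := beta_succ m 0
      push_cast at hb ⊢
      norm_num
      linear_combination x ^ 2 * hb
    | succ n =>
      have hb := beta_succ m (n + 1)
      rw [show 2 * (n + 1) - 1 = 2 * n + 1 from by omega,
        show 2 * (n + 1) = 2 * n + 2 from by omega,
        show 2 * (n + 1 + 1) = 2 * n + 4 from by omega]
      push_cast at hb ⊢
      linear_combination (x ^ (2 * n + 4)) * hb
  calc x * (x ^ 2 - 1) * (∑ k ∈ Finset.range m, betaCoef m k * ((2 * k) * x ^ (2 * k - 1)))
      + ((2 * m - 1) - 2 * ((m : ℝ) - 1) * x ^ 2) * hFun m x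
      = ∑ k ∈ Finset.range m,
          (betaCoef m k * (2 * (m:ℝ) - 1 - 2 * k) * x ^ (2 * k)
            - betaCoef m (k+1) * (2 * (m:ℝ) - 1 - 2 * (k+1:ℕ)) * x ^ (2 * (k+1))) := by
        unfold hFun
        rw [Finset.mul_sum, Finset.mul_sum, ← Finset.sum_add_distrib]
        exact Finset.sum_congr rfl fun k _ => key k
    _ = betaCoef m 0 * (2 * (m:ℝ) - 1 - 2 * (0:ℕ)) * x ^ (2 * 0)
          - betaCoef m m * (2 * (m:ℝ) - 1 - 2 * (m:ℕ)) * x ^ (2 * m) :=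
        Finset.sum_range_sub' (fun k => betaCoef m k * (2 * (m:ℝ) - 1 - 2 * (k:ℕ)) * x ^ (2 * k)) m
    _ = 4 * m := by
        have h1 : (2 * (m:ℝ) - 1) ≠ 0 := fun h => odd_ne m 0 (by push_cast; linarith)
        rw [beta_m_zero, beta_zero]
        norm_num
        field_simp
        ring


/-- `u` satisfies the Riccati-type ODE
`x(1−x²)u' − 4m u² + (2(m+1)x² + 1 − 2m)u − x²/(2m) = 0` on `(0,1)`. -/
theorem uFun_riccati (m : ℕ) (hm : 2 ≤ m) (x : ℝ) (hx0 : 0 < x) (hx1 : x < 1) :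
    x * (1 - x ^ 2) * deriv (uFun m) x - 4 * m * (uFun m x) ^ 2 +
      (2 * ((m : ℝ) + 1) * x ^ 2 + 1 - 2 * m) * uFun m x - x ^ 2 / (2 * m) = 0 := by
  have hmR : (2:ℝ) ≤ (m:ℝ) := by exact_mod_cast hm
  have hm0 : (m:ℝ) ≠ 0 := by linarith
  have hh := hFun_pos m hm x hx0
  have hne : hFun m x ≠ 0 := ne_of_gt hh
  set H := hFun m x with hH
  set D := ∑ k ∈ Finset.range m, betaCoef m k * ((2 * k) * x ^ (2 * k - 1)) with hD
  have h1 : HasDerivAt (fun y => 1 / hFun m y) (-D / H ^ 2) x := by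
    simpa [one_div] using ((hasDerivAt_hFun m x).fun_inv hne)
  have h2 : HasDerivAt (fun y : ℝ => (1 - y ^ 2) / 2) (-x) x := by
    have := ((hasDerivAt_pow 2 x).const_sub 1).div_const 2
    exact this.congr_deriv (by norm_num; ring)
  have hder : HasDerivAt (uFun m) (-D / H ^ 2 + x) x := by
    have h3 := (h1.sub h2).add_const (1 / (4 * (m:ℝ)))
    exact h3.congr_deriv (by ring)
  rw [hder.deriv]
  have E := hODE m hm x
  rw [← hH, ← hD] at E
  have hu : uFun m x = 1 / H - (1 - x ^ 2) / 2 + 1 / (4 * m) := rfl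
  rw [hu]
  field_simp
  linear_combination (16 * (m:ℝ)) * E
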